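/- arXiv:2401.07936 — 3 statements merged into one kernel-verified Lean document; each statement's English description precedes it below -/
import Mathlib

section
/- Let (a^k) be a sequence of reals with a^k > a* for all k and a^k → a*, and suppose there exist C > 0, K₀ ∈ ℕ, q ∈ ℕ with q ≥ 1, and ξ ∈ ℝ with 1/(2(q+1)) < ξ < 1/(2q) such that a^k − a* ≥ a^{k+1} − a* + C (a^{k+1} − a*)^{2ξ} for all k ≥ K₀. Then lim_{k→∞} (a^{k+1} − a*)/(a^k − a*)^q = 0, i.e., the sequence converges to a* with Q-order strictly greater than q. -/
open Filter Topology

/-!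
The decrease condition gives `C e_{k+1}^{2ξ} ≤ e_k` for the gaps `e_k = a^k - a*`, that is
`e_{k+1} ≤ (e_k / C)^{1/(2ξ)}`. Since `1/(2ξ) > q`, the ratio `e_{k+1} / e_k^q` is at most
`e_k^{1/(2ξ) - q} / C^{1/(2ξ)}`, which tends to `0` with `e_k`.
-/

lemma le_rpow_inv_of_mul_rpow_le {x y C p : ℝ} (hx : 0 ≤ x) (hC : 0 < C) (hp : 0 < p)
    (h : C * x ^ p ≤ y) : x ≤ (y / C) ^ p⁻¹ := by
  have hxp : x ^ p ≤ y / C := by rw [le_div_iff₀ hC]; linarith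
  calc x = (x ^ p) ^ p⁻¹ := (Real.rpow_rpow_inv hx hp.ne').symm
    _ ≤ (y / C) ^ p⁻¹ := by gcongr

theorem tendsto_div_rpow_of_mul_rpow_le {e : ℕ → ℝ} {C p q : ℝ} (he : ∀ k, 0 < e k)
    (he0 : Tendsto e atTop (𝓝 0)) (hC : 0 < C) (hp : 0 < p) (hpq : p * q < 1)
    (hdec : ∀ᶠ k in atTop, C * e (k + 1) ^ p ≤ e k) :
    Tendsto (fun k => e (k + 1) / e k ^ q) atTop (𝓝 0) := by
  have hgap : 0 < p⁻¹ - q := sub_pos.mpr (by rw [← one_div, lt_div_iff₀ hp]; linarith)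
  have hbound : Tendsto (fun k => e k ^ (p⁻¹ - q) / C ^ p⁻¹) atTop (𝓝 0) := by
    simpa [Real.zero_rpow hgap.ne'] using
      (he0.rpow_const (Or.inr hgap.le)).div_const (C ^ p⁻¹)
  refine squeeze_zero' (Eventually.of_forall fun k => ?_) ?_ hbound
  · exact div_nonneg (he _).le (Real.rpow_nonneg (he k).le q)
  filter_upwards [hdec] with k hk
  calc e (k + 1) / e k ^ q ≤ (e k / C) ^ p⁻¹ / e k ^ q := by
        gcongr
        · exact Real.rpow_nonneg (he k).le q
        · exact le_rpow_inv_of_mul_rpow_le (he _).le hC hp hk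
    _ = e k ^ (p⁻¹ - q) / C ^ p⁻¹ := by
        rw [Real.div_rpow (he k).le hC.le, div_right_comm, ← Real.rpow_sub (he k)]

theorem superq_loss_convergence_general
    (a : ℕ → ℝ) (astar : ℝ) (ha : ∀ k, astar < a k)
    (hlim : Tendsto a atTop (nhds astar))
    (C : ℝ) (hC : 0 < C) (K₀ : ℕ) (q : ℕ) (ξ : ℝ)
    (hξ₁ : 1 / (2 * ((q : ℝ) + 1)) < ξ) (hξ₂ : ξ < 1 / (2 * (q : ℝ)))
    (hrec : ∀ k ≥ K₀, a k - astar ≥ (a (k + 1) - astar)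
        + C * (a (k + 1) - astar) ^ (2 * ξ)) :
    Tendsto (fun k => (a (k + 1) - astar) / (a k - astar) ^ q) atTop (nhds 0) := by
  have hξ : 0 < ξ := lt_trans (by positivity) hξ₁
  have hξq : 2 * ξ * q < 1 := by
    obtain rfl | hq := Nat.eq_zero_or_pos q
    · simp
    · rw [lt_div_iff₀ (by positivity)] at hξ₂
      linarith
  have hgap : Tendsto (fun k => a k - astar) atTop (𝓝 0) := by
    simpa using hlim.sub_const astar
  have hdec : ∀ᶠ k in atTop, C * (a (k + 1) - astar) ^ (2 * ξ) ≤ a k - astar :=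
    (eventually_ge_atTop K₀).mono fun k hk => by linarith [hrec k hk, ha (k + 1)]
  simpa only [Real.rpow_natCast] using
    tendsto_div_rpow_of_mul_rpow_le (fun k => sub_pos.mpr (ha k)) hgap hC (by positivity) hξq hdec

theorem superq_loss_convergence
    (a : ℕ → ℝ) (astar : ℝ) (ha : ∀ k, astar < a k)
    (hlim : Tendsto a atTop (nhds astar))
    (C : ℝ) (hC : 0 < C) (K₀ : ℕ) (q : ℕ) (hq : 1 ≤ q) (ξ : ℝ)
    (hξ₁ : 1 / (2 * ((q : ℝ) + 1)) < ξ) (hξ₂ : ξ < 1 / (2 * (q : ℝ)))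
    (hrec : ∀ k ≥ K₀, a k - astar ≥ (a (k + 1) - astar)
        + C * (a (k + 1) - astar) ^ (2 * ξ)) :
    Tendsto (fun k => (a (k + 1) - astar) / (a k - astar) ^ q) atTop (nhds 0) :=
  superq_loss_convergence_general a astar ha hlim C hC K₀ q ξ hξ₁ hξ₂ hrec
end

section
/- Let ξ ∈ (1/2, 1) and let (S_k) be a nonincreasing sequence of nonnegative reals converging to 0 with S_k^{ξ/(1−ξ)} ≤ C (S_{k−1} − S_k) for all k ≥ K₀ and some C > 0. Then there exists a constant C' > 0 such that S_k ≤ C' k^{−(1−ξ)/(2ξ−1)} for all sufficiently large k. -/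
open Filter Real

/-!
With `θ = ξ / (1 - ξ) > 1`, the quantity `S k ^ (1 - θ)` grows by a fixed amount at every step
from `K₀` on. If `S (k + 1) ≤ S k / 2`, it is multiplied by at least `2 ^ (θ - 1) > 1`; otherwise the
tangent line of the convex function `t ↦ t ^ (1 - θ)` at `S k`, combined with the recurrence, gives
an increment of at least `(θ - 1) / C * 2 ^ (-θ)`. Linear growth of `S k ^ (1 - θ)` means
`S k = O(k ^ (1 - θ)⁻¹)`, and `(1 - θ)⁻¹ = -(1 - ξ) / (2ξ - 1)`. A sequence that reaches `0` stays there.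
-/

theorem one_add_mul_sub_one_le_rpow_of_nonpos {x q : ℝ} (hx : 0 < x) (hq : q ≤ 0) :
    1 + q * (x - 1) ≤ x ^ q :=
  calc 1 + q * (x - 1) ≤ 1 + q * log x := by
        linarith [mul_le_mul_of_nonpos_left (log_le_sub_one_of_pos hx) hq]
    _ ≤ exp (log x * q) := by linarith [add_one_le_exp (log x * q)]
    _ = x ^ q := (rpow_def_of_pos hx q).symm

theorem rpow_add_mul_rpow_sub_one_mul_sub_le_of_nonpos {a b q : ℝ} (ha : 0 < a) (hb : 0 < b)
    (hq : q ≤ 0) : a ^ q + q * a ^ (q - 1) * (b - a) ≤ b ^ q := by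
  calc a ^ q + q * a ^ (q - 1) * (b - a) = a ^ q * (1 + q * (b / a - 1)) := by
        rw [rpow_sub_one ha.ne']
        field_simp
    _ ≤ a ^ q * (b / a) ^ q :=
        mul_le_mul_of_nonneg_left (one_add_mul_sub_one_le_rpow_of_nonpos (div_pos hb ha) hq)
          (rpow_nonneg ha.le q)
    _ = b ^ q := by rw [div_rpow hb.le ha.le, mul_div_cancel₀ _ (rpow_pos_of_pos ha q).ne']

theorem min_le_rpow_one_sub_sub_rpow_one_sub {a b θ C : ℝ} (hθ : 1 < θ) (hC : 0 < C)
    (ha : 0 < a) (hb : 0 < b) (hrec : b ^ θ ≤ C * (a - b)) :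
    min ((2 ^ (θ - 1) - 1) * a ^ (1 - θ)) ((θ - 1) / C * (1 / 2) ^ θ) ≤
      b ^ (1 - θ) - a ^ (1 - θ) := by
  rcases le_or_gt b (a / 2) with hsmall | hlarge
  · refine min_le_of_left_le ?_
    have : 2 ^ (θ - 1) * a ^ (1 - θ) ≤ b ^ (1 - θ) :=
      calc 2 ^ (θ - 1) * a ^ (1 - θ) = (a / 2) ^ (1 - θ) := by
            rw [div_rpow ha.le zero_le_two, div_eq_mul_inv, ← rpow_neg zero_le_two, neg_sub,
              mul_comm]
        _ ≤ b ^ (1 - θ) := rpow_le_rpow_of_nonpos hb hsmall (by linarith)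
    linarith
  · refine min_le_of_right_le ?_
    have tangent := rpow_add_mul_rpow_sub_one_mul_sub_le_of_nonpos ha hb (q := 1 - θ) (by linarith)
    have hba : 1 / 2 ≤ b / a := by rw [le_div_iff₀ ha]; linarith
    calc (θ - 1) / C * (1 / 2) ^ θ ≤ (θ - 1) / C * (b / a) ^ θ := by
          gcongr
      _ = (θ - 1) * a ^ (-θ) * (b ^ θ / C) := by
          rw [div_rpow hb.le ha.le, rpow_neg ha.le]
          ring
      _ ≤ (θ - 1) * a ^ (-θ) * (a - b) := by
          gcongr
          rwa [div_le_iff₀' hC]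
      _ = (1 - θ) * a ^ (1 - θ - 1) * (b - a) := by ring_nf
      _ ≤ b ^ (1 - θ) - a ^ (1 - θ) := by linarith

theorem add_mul_sub_le_of_add_le_succ {u : ℕ → ℝ} {c : ℝ} {K₀ : ℕ}
    (h : ∀ k ≥ K₀, u k + c ≤ u (k + 1)) {k : ℕ} (hk : K₀ ≤ k) : u K₀ + c * (k - K₀) ≤ u k := by
  induction k, hk using Nat.le_induction with
  | base => simp
  | succ k hk ih =>
    push_cast
    linarith [h k hk]

section PositiveSequence

variable {S : ℕ → ℝ} {θ C : ℝ} {K₀ : ℕ}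

theorem exists_add_mul_le_rpow_one_sub (hθ : 1 < θ) (hC : 0 < C) (hpos : ∀ k, 0 < S k)
    (hanti : Antitone S) (hrec : ∀ k ≥ K₀, S (k + 1) ^ θ ≤ C * (S k - S (k + 1))) :
    ∃ c > 0, ∀ k ≥ K₀, S K₀ ^ (1 - θ) + c * (k - K₀) ≤ S k ^ (1 - θ) := by
  have h2 : 1 < (2 : ℝ) ^ (θ - 1) := one_lt_rpow one_lt_two (by linarith)
  refine ⟨min ((2 ^ (θ - 1) - 1) * S K₀ ^ (1 - θ)) ((θ - 1) / C * (1 / 2) ^ θ), ?_,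
    fun k hk => add_mul_sub_le_of_add_le_succ (u := fun k => S k ^ (1 - θ)) (fun k hk => ?_) hk⟩
  · exact lt_min (mul_pos (by linarith) (rpow_pos_of_pos (hpos K₀) _))
      (mul_pos (div_pos (by linarith) hC) (by positivity))
  · have hgrow : S K₀ ^ (1 - θ) ≤ S k ^ (1 - θ) :=
      rpow_le_rpow_of_nonpos (hpos k) (hanti hk) (by linarith)
    have hstep := min_le_rpow_one_sub_sub_rpow_one_sub hθ hC (hpos k) (hpos (k + 1)) (hrec k hk)
    have : min ((2 ^ (θ - 1) - 1) * S K₀ ^ (1 - θ)) ((θ - 1) / C * (1 / 2) ^ θ) ≤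
        min ((2 ^ (θ - 1) - 1) * S k ^ (1 - θ)) ((θ - 1) / C * (1 / 2) ^ θ) :=
      min_le_min_right _ (mul_le_mul_of_nonneg_left hgrow (by linarith))
    linarith

theorem exists_le_mul_rpow_inv_one_sub (hθ : 1 < θ) (hC : 0 < C) (hpos : ∀ k, 0 < S k)
    (hanti : Antitone S) (hrec : ∀ k ≥ K₀, S (k + 1) ^ θ ≤ C * (S k - S (k + 1))) :
    ∃ C' > (0 : ℝ), ∃ K₁ : ℕ, ∀ k ≥ K₁, S k ≤ C' * (k : ℝ) ^ (1 - θ)⁻¹ := by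
  obtain ⟨c, hc, hgrowth⟩ := exists_add_mul_le_rpow_one_sub hθ hC hpos hanti hrec
  refine ⟨(c / 2) ^ (1 - θ)⁻¹, by positivity, 2 * K₀ + 1, fun k hk => ?_⟩
  have hk0 : (0 : ℝ) < k := by exact_mod_cast (show 0 < k by omega)
  have hkK : (2 * K₀ : ℝ) ≤ k := by exact_mod_cast (show 2 * K₀ ≤ k by omega)
  have hlin : c / 2 * k ≤ S k ^ (1 - θ) := by
    nlinarith [hgrowth k (by omega), rpow_pos_of_pos (hpos K₀) (1 - θ)]
  rw [← mul_rpow (by positivity) hk0.le]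
  exact (le_rpow_inv_iff_of_neg (hpos k) (by positivity) (by linarith)).2 hlin

end PositiveSequence

theorem sublinear_rate_KL_general
    (S : ℕ → ℝ) (ξ : ℝ) (hξ₁ : 1 / 2 < ξ) (hξ₂ : ξ < 1)
    (hnn : ∀ k, 0 ≤ S k) (hmono : ∀ k, S (k + 1) ≤ S k)
    (C : ℝ) (hC : 0 < C) (K₀ : ℕ)
    (hrec : ∀ k ≥ K₀, S (k + 1) ^ (ξ / (1 - ξ)) ≤ C * (S k - S (k + 1))) :
    ∃ C' > (0:ℝ), ∃ K₁ : ℕ, ∀ k ≥ K₁, S k ≤ C' * (k : ℝ) ^ (-(1 - ξ) / (2 * ξ - 1)) := by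
  have hanti : Antitone S := antitone_nat_of_succ_le hmono
  by_cases hzero : ∃ N, S N = 0
  · obtain ⟨N, hN⟩ := hzero
    refine ⟨1, one_pos, N, fun k hk => ?_⟩
    rw [le_antisymm (hN ▸ hanti hk) (hnn k)]
    positivity
  · push Not at hzero
    have hθ : 1 < ξ / (1 - ξ) := by rw [lt_div_iff₀ (by linarith)]; linarith
    have hexp : -(1 - ξ) / (2 * ξ - 1) = (1 - ξ / (1 - ξ))⁻¹ := by
      rw [one_sub_div (by linarith), inv_div, neg_div, ← div_neg]
      ring_nf
    rw [hexp]
    exact exists_le_mul_rpow_inv_one_sub hθ hC (fun k => (hnn k).lt_of_ne' (hzero k)) hanti hrec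

theorem sublinear_rate_KL
    (S : ℕ → ℝ) (ξ : ℝ) (hξ₁ : 1 / 2 < ξ) (hξ₂ : ξ < 1)
    (hnn : ∀ k, 0 ≤ S k) (hmono : ∀ k, S (k + 1) ≤ S k)
    (hlim : Tendsto S atTop (nhds 0))
    (C : ℝ) (hC : 0 < C) (K₀ : ℕ)
    (hrec : ∀ k ≥ K₀, S (k + 1) ^ (ξ / (1 - ξ)) ≤ C * (S k - S (k + 1))) :
    ∃ C' > (0:ℝ), ∃ K₁ : ℕ, ∀ k ≥ K₁, S k ≤ C' * (k : ℝ) ^ (-(1 - ξ) / (2 * ξ - 1)) :=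
  sublinear_rate_KL_general S ξ hξ₁ hξ₂ hnn hmono C hC K₀ hrec
end

section
/- Let q ∈ ℕ with q ≥ 2, λ > 0, and let f : ℝ^n → ℝ be defined by f(x) = ‖x‖^{2q/(2q−1)}. Let x^k ≠ 0 and let x^{k+1} ≠ 0 satisfy the proximal optimality condition x^{k+1} = x^k − (2qλ/(2q−1)) ‖x^{k+1}‖^{2(1−q)/(2q−1)} x^{k+1}. Then ‖x^{k+1}‖ / ‖x^k‖^{2q−1} ≤ 1 / ((2qλ/(2q−1))^{2q−1}). -/
/-!
Write `t = ‖x^{k+1}‖`, `m = 2q − 1` and `c = 2qλ/(2q−1)`. The optimality condition says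
`x^k = (1 + c t^{1/m − 1}) x^{k+1}`, so `‖x^k‖ = t + c t^{1/m} ≥ c t^{1/m}`; raising this to the
`m`-th power gives `c^m t ≤ ‖x^k‖^m`.
-/

lemma norm_eq_one_add_mul_norm_of_eq_sub_smul {E : Type*} [SeminormedAddCommGroup E]
    [NormedSpace ℝ E] {x y : E} {s : ℝ} (hs : 0 ≤ s) (h : y = x - s • y) :
    ‖x‖ = (1 + s) * ‖y‖ := by
  have hx : x = (1 + s) • y := by
    rw [add_smul, one_smul]
    exact sub_eq_iff_eq_add.mp h.symm
  rw [hx, norm_smul, Real.norm_eq_abs, abs_of_nonneg (by linarith)]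

lemma pow_mul_le_pow_one_add_mul_rpow_mul {m : ℕ} (hm : m ≠ 0) {c t : ℝ} (hc : 0 ≤ c)
    (ht : 0 ≤ t) : c ^ m * t ≤ ((1 + c * t ^ ((m : ℝ)⁻¹ - 1)) * t) ^ m := by
  rcases ht.eq_or_lt with rfl | ht
  · simp [hm]
  have hroot : c * t ^ (m : ℝ)⁻¹ ≤ (1 + c * t ^ ((m : ℝ)⁻¹ - 1)) * t := by
    rw [Real.rpow_sub_one ht.ne', add_mul, mul_assoc, div_mul_cancel₀ _ ht.ne']
    linarith
  calc c ^ m * t = (c * t ^ (m : ℝ)⁻¹) ^ m := by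
        rw [mul_pow, Real.rpow_inv_natCast_pow ht.le hm]
    _ ≤ _ := pow_le_pow_left₀ (by positivity) hroot m

theorem proximal_step_convergence_order_general
    (n q : ℕ) (hq : 2 ≤ q) (lam : ℝ) (hlam : 0 < lam)
    (xk xk1 : EuclideanSpace ℝ (Fin n))
    (hopt : xk1 = xk - ((2 * (q : ℝ) * lam / (2 * (q : ℝ) - 1)) *
      ‖xk1‖ ^ ((2 * (1 - (q : ℝ))) / (2 * (q : ℝ) - 1))) • xk1) :
    ‖xk1‖ / ‖xk‖ ^ (2 * q - 1) ≤ 1 / ((2 * (q : ℝ) * lam / (2 * (q : ℝ) - 1)) ^ (2 * q - 1)) := by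
  set m := 2 * q - 1 with hm_def
  have hm : (m : ℝ) = 2 * q - 1 := by
    rw [hm_def, Nat.cast_sub (by omega)]
    push_cast
    ring
  have hq' : (2 : ℝ) ≤ q := by exact_mod_cast hq
  set c := 2 * (q : ℝ) * lam / (2 * (q : ℝ) - 1)
  have hden : (0 : ℝ) < 2 * q - 1 := by linarith
  have hc : 0 < c := div_pos (by positivity) hden
  have hexp : (2 * (1 - (q : ℝ))) / (2 * (q : ℝ) - 1) = (m : ℝ)⁻¹ - 1 := by
    rw [hm]
    field_simp [hden.ne']
    ring
  rw [hexp] at hopt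
  have hnorm := norm_eq_one_add_mul_norm_of_eq_sub_smul (by positivity) hopt
  have hbound : c ^ m * ‖xk1‖ ≤ ‖xk‖ ^ m := by
    rw [hnorm]
    exact pow_mul_le_pow_one_add_mul_rpow_mul (by omega) hc.le (norm_nonneg _)
  refine div_le_of_le_mul₀ (by positivity) (by positivity) ?_
  rwa [one_div_mul_eq_div, le_div_iff₀ (by positivity), mul_comm]

theorem proximal_step_convergence_order
    (n q : ℕ) (hq : 2 ≤ q) (lam : ℝ) (hlam : 0 < lam)
    (xk xk1 : EuclideanSpace ℝ (Fin n)) (hxk : xk ≠ 0) (hxk1 : xk1 ≠ 0)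
    (hopt : xk1 = xk - ((2 * (q : ℝ) * lam / (2 * (q : ℝ) - 1)) *
      ‖xk1‖ ^ ((2 * (1 - (q : ℝ))) / (2 * (q : ℝ) - 1))) • xk1) :
    ‖xk1‖ / ‖xk‖ ^ (2 * q - 1) ≤ 1 / ((2 * (q : ℝ) * lam / (2 * (q : ℝ) - 1)) ^ (2 * q - 1)) :=
  proximal_step_convergence_order_general n q hq lam hlam xk xk1 hopt
end
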